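/- arXiv:2006.06904 — 4 statements merged into one kernel-verified Lean document; each statement's English description precedes it below -/
import Mathlib

section
/- For every natural number p, [p]_v! · ∑_{k+m=p, k,m ≥ 0} v^{-2(k-1)m - p(3-p)/2} / ([2k]_v!! · [2m]_v!!) = 1 in ℚ(v). -/
open scoped BigOperators
open Finset

noncomputable section

abbrev K : Type := RatFunc ℚ

def v : K := RatFunc.X

/-- Balanced quantum integer `[n]_v = (v^n - v^{-n})/(v - v⁻¹)`. -/
def qint (n : ℤ) : K := (v ^ n - v ^ (-n)) / (v - v⁻¹)

/-- Balanced quantum factorial `[n]_v!`. -/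
def qfact : ℕ → K
  | 0 => 1
  | n + 1 => qfact n * qint ((n : ℤ) + 1)

/-- Balanced Gaussian binomial coefficient `[p choose t]_v`. -/
def qbinom (p t : ℕ) : K := qfact p / (qfact t * qfact (p - t))

/-- Quantum double factorial `[2k]_v!! = [2k]_v [2k-2]_v ⋯ [2]_v`. -/
def ddfact : ℕ → K
  | 0 => 1
  | k + 1 => ddfact k * qint (2 * ((k : ℤ) + 1))

/-! Write `S p` for the sum. Splitting `[2p+2] = v^(2k-2p-2) [2k] + v^(2k) [2p+2-2k]` in each
summand of `[2p+2] S (p+1)`, the two halves telescope against the recursion of `ddfact` to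
`v^(-(p+1)) S p` (after the reflection `k ↦ p - k`) and `v^(p+1) S p`. Since
`[2p+2] = (v^(p+1) + v^(-(p+1))) [p+1]`, this says `[p+1] S (p+1) = S p`, so `[p]! S p` is
constant, equal to its value `1` at `p = 0`. -/

lemma v_ne_zero : v ≠ 0 := RatFunc.X_ne_zero

lemma v_pow_ne_one {n : ℕ} (hn : 0 < n) : v ^ n ≠ 1 := by
  intro h
  have hX : (Polynomial.X ^ n : Polynomial ℚ) = 1 :=
    RatFunc.algebraMap_injective ℚ (by simpa [v] using h)
  simpa [hn.ne'] using congrArg Polynomial.natDegree hX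

lemma v_zpow_ne_one {m : ℤ} (hm : m ≠ 0) : v ^ m ≠ 1 := by
  obtain ⟨n, rfl | rfl⟩ := Int.eq_nat_or_neg m
  · rw [zpow_natCast]
    exact v_pow_ne_one (by omega)
  · rw [zpow_neg, zpow_natCast, inv_ne_one]
    exact v_pow_ne_one (by omega)

lemma zpow_sub_zpow_neg_ne_zero {n : ℤ} (hn : n ≠ 0) : v ^ n - v ^ (-n) ≠ 0 := by
  intro h
  apply v_zpow_ne_one (m := n + n) (by omega)
  rw [zpow_add₀ v_ne_zero]
  nth_rw 2 [sub_eq_zero.mp h]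
  rw [← zpow_add₀ v_ne_zero, add_neg_cancel, zpow_zero]

lemma qint_ne_zero {n : ℤ} (hn : n ≠ 0) : qint n ≠ 0 := by
  refine div_ne_zero (zpow_sub_zpow_neg_ne_zero hn) ?_
  simpa using zpow_sub_zpow_neg_ne_zero (n := 1) one_ne_zero

lemma qint_zero : qint 0 = 0 := by
  simp [qint]

lemma qint_add (a b : ℤ) : qint (a + b) = v ^ (-b) * qint a + v ^ a * qint b := by
  simp only [qint, neg_add, zpow_add₀ v_ne_zero]
  ring

lemma qint_two_mul (n : ℤ) : qint (2 * n) = (v ^ n + v ^ (-n)) * qint n := by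
  simp only [qint, two_mul, neg_add, zpow_add₀ v_ne_zero]
  ring

lemma ddfact_ne_zero (k : ℕ) : ddfact k ≠ 0 := by
  induction k with
  | zero => exact one_ne_zero
  | succ k ih => exact mul_ne_zero ih (qint_ne_zero (by omega))

def expo (p k : ℤ) : ℤ := -(2 * (k - 1) * (p - k)) - p * (3 - p) / 2

lemma expo_succ_succ (p k : ℤ) : expo (p + 1) (k + 1) = expo p k + (2 * k - p - 1) := by
  have h : (p + 1) * (3 - (p + 1)) = p * (3 - p) + (1 - p) * 2 := by ring
  rw [expo, expo, h, Int.add_mul_ediv_right _ _ two_ne_zero]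
  ring

lemma expo_succ_left (p k : ℤ) : expo (p + 1) k = expo p k + (p + 1 - 2 * k) := by
  have h : (p + 1) * (3 - (p + 1)) = p * (3 - p) + (1 - p) * 2 := by ring
  rw [expo, expo, h, Int.add_mul_ediv_right _ _ two_ne_zero]
  ring

lemma expo_sub_right (p k : ℤ) : expo p (p - k) = expo p k + (4 * k - 2 * p) := by
  simp only [expo]
  ring

def ddterm (p k : ℕ) : K := v ^ expo p k / (ddfact k * ddfact (p - k))

def ddsum (p : ℕ) : K := ∑ k ∈ range (p + 1), ddterm p k

lemma qint_mul_ddterm_succ_succ (p k : ℕ) :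
    qint (2 * ((k : ℤ) + 1)) * ddterm (p + 1) (k + 1) =
      v ^ (2 * (k : ℤ) - p - 1) * ddterm p k := by
  have hq := qint_ne_zero (n := 2 * ((k : ℤ) + 1)) (by omega)
  have hD := ddfact_ne_zero k
  have hD' := ddfact_ne_zero (p - k)
  rw [ddterm, ddterm, Nat.add_sub_add_right, ddfact]
  push_cast
  rw [expo_succ_succ, zpow_add₀ v_ne_zero]
  field_simp

lemma qint_mul_ddterm_succ {p k : ℕ} (hk : k ≤ p) :
    qint (2 * ((p : ℤ) + 1 - k)) * ddterm (p + 1) k =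
      v ^ ((p : ℤ) + 1 - 2 * k) * ddterm p k := by
  have hq := qint_ne_zero (n := 2 * ((p : ℤ) + 1 - k)) (by omega)
  have hD := ddfact_ne_zero k
  have hD' := ddfact_ne_zero (p - k)
  rw [ddterm, ddterm, Nat.sub_add_comm hk, ddfact]
  push_cast [hk]
  rw [expo_succ_left, zpow_add₀ v_ne_zero, show (p : ℤ) - k + 1 = p + 1 - k by ring]
  field_simp

lemma ddterm_sub {p k : ℕ} (hk : k ≤ p) :
    ddterm p (p - k) = v ^ (4 * (k : ℤ) - 2 * p) * ddterm p k := by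
  rw [ddterm, ddterm, Nat.sub_sub_self hk, Nat.cast_sub hk, expo_sub_right, zpow_add₀ v_ne_zero,
    mul_comm (ddfact k)]
  ring

lemma sum_zpow_mul_ddterm_eq_ddsum (p : ℕ) :
    ∑ k ∈ range (p + 1), v ^ (4 * (k : ℤ) - 2 * p) * ddterm p k = ddsum p := by
  rw [ddsum, ← sum_range_reflect (ddterm p)]
  refine sum_congr rfl fun k hk => ?_
  rw [Nat.add_sub_cancel, ddterm_sub (by simpa [Nat.lt_succ_iff] using hk)]

lemma qint_two_mul_ddsum_succ (p : ℕ) :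
    qint (2 * ((p : ℤ) + 1)) * ddsum (p + 1) =
      (v ^ ((p : ℤ) + 1) + v ^ (-((p : ℤ) + 1))) * ddsum p := by
  have hsplit (k : ℕ) : qint (2 * ((p : ℤ) + 1)) * ddterm (p + 1) k =
      v ^ (2 * (k : ℤ) - 2 * ((p : ℤ) + 1)) * (qint (2 * k) * ddterm (p + 1) k)
        + v ^ (2 * (k : ℤ)) * (qint (2 * ((p : ℤ) + 1 - k)) * ddterm (p + 1) k) := by
    have h := qint_add (2 * k) (2 * ((p : ℤ) + 1 - k))
    rw [show 2 * (k : ℤ) + 2 * ((p : ℤ) + 1 - k) = 2 * ((p : ℤ) + 1) by ring,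
      show -(2 * ((p : ℤ) + 1 - k)) = 2 * (k : ℤ) - 2 * ((p : ℤ) + 1) by ring] at h
    rw [h]
    ring
  calc qint (2 * ((p : ℤ) + 1)) * ddsum (p + 1)
      = ∑ k ∈ range (p + 1 + 1),
          (v ^ (2 * (k : ℤ) - 2 * ((p : ℤ) + 1)) * (qint (2 * k) * ddterm (p + 1) k)
            + v ^ (2 * (k : ℤ)) * (qint (2 * ((p : ℤ) + 1 - k)) * ddterm (p + 1) k)) := by
        rw [ddsum, mul_sum]
        exact sum_congr rfl fun k _ => hsplit k
    _ = ∑ k ∈ range (p + 1), v ^ (2 * ((k : ℤ) + 1) - 2 * ((p : ℤ) + 1)) *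
            (qint (2 * ((k : ℤ) + 1)) * ddterm (p + 1) (k + 1))
          + ∑ k ∈ range (p + 1),
              v ^ (2 * (k : ℤ)) * (qint (2 * ((p : ℤ) + 1 - k)) * ddterm (p + 1) k) := by
        rw [sum_add_distrib, sum_range_succ',
          sum_range_succ (fun k : ℕ => v ^ (2 * (k : ℤ)) * _)]
        push_cast
        simp only [mul_zero, sub_self, qint_zero, zero_mul, add_zero]
    _ = ∑ k ∈ range (p + 1), v ^ (-((p : ℤ) + 1)) * (v ^ (4 * (k : ℤ) - 2 * p) * ddterm p k)
          + ∑ k ∈ range (p + 1), v ^ ((p : ℤ) + 1) * ddterm p k := by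
        congr 1 <;> refine sum_congr rfl fun k hk => ?_
        · rw [qint_mul_ddterm_succ_succ, ← mul_assoc, ← mul_assoc, ← zpow_add₀ v_ne_zero,
            ← zpow_add₀ v_ne_zero]
          ring_nf
        · rw [qint_mul_ddterm_succ (by simpa [Nat.lt_succ_iff] using hk), ← mul_assoc,
            ← zpow_add₀ v_ne_zero]
          ring_nf
    _ = (v ^ ((p : ℤ) + 1) + v ^ (-((p : ℤ) + 1))) * ddsum p := by
        rw [← mul_sum, ← mul_sum, sum_zpow_mul_ddterm_eq_ddsum, ddsum]
        ring

lemma qint_succ_mul_ddsum_succ (p : ℕ) : qint ((p : ℤ) + 1) * ddsum (p + 1) = ddsum p := by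
  have h := qint_two_mul_ddsum_succ p
  rw [qint_two_mul, mul_assoc] at h
  -- `v ^ (p + 1) + v ^ (-(p + 1))` is a factor of `[2p+2] ≠ 0`
  refine mul_left_cancel₀ (fun h0 => qint_ne_zero (n := 2 * ((p : ℤ) + 1)) (by omega) ?_) h
  rw [qint_two_mul, h0, zero_mul]

lemma qfact_mul_ddsum (p : ℕ) : qfact p * ddsum p = 1 := by
  induction p with
  | zero => simp [ddsum, ddterm, expo, qfact, ddfact]
  | succ p ih => rw [qfact, mul_assoc, qint_succ_mul_ddsum_succ, ih]

/-- . -/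
theorem qfact_ddfact_sum_eq_one (p : ℕ) :
    qfact p * ∑ k ∈ range (p + 1),
      v ^ (-(2 * ((k : ℤ) - 1) * ((p : ℤ) - (k : ℤ))) - ((p : ℤ) * (3 - (p : ℤ))) / 2)
        / (ddfact k * ddfact (p - k)) = 1 :=
  qfact_mul_ddsum p
end
end

section
/- For every natural number p, ∑_{k=0}^{p} v^{p(p+1)/2 - 2k(p-k+1)} [p choose k]_{v²} = [2p]_v!! / [p]_v! in ℚ(v). -/
/-!
Put x = v² and q = x⁻¹ = v⁻². From `[a + b]_x = x^a [b]_x + x^(-b) [a]_x` one gets that the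
balanced binomial `[p choose k]_x` is `x^(k(p-k))` times the ordinary Gaussian binomial
`[p choose k]` in the parameter q², so after pulling out `v^(p(p+1)/2)` the sum is the
Rogers–Szegő polynomial `H_p(t) = ∑ₖ tᵏ [p choose k]_{q²}` at t = q. Combining the two
Pascal rules gives `H_{n+2}(t) = (1 + t) H_{n+1}(t) - t (1 - q^(2(n+1))) H_n(t)`, which at
t = q is solved by `∏_{i=1}^n (1 + qⁱ)`. On the other side `[2i]_v = (vⁱ + v⁻ⁱ) [i]_v`, so
`[2p]_v!! / [p]_v! = ∏_{i=1}^p (vⁱ + v⁻ⁱ) = v^(p(p+1)/2) ∏_{i=1}^p (1 + qⁱ)`.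
-/

open scoped BigOperators
open Finset

noncomputable section

/-- Quantum integer with base x. -/
def qintAt (x : K) (n : ℤ) : K := (x ^ n - x ^ (-n)) / (x - x⁻¹)

def qfactAt (x : K) : ℕ → K
  | 0 => 1
  | n + 1 => qfactAt x n * qintAt x ((n : ℤ) + 1)

/-- Balanced Gaussian binomial at base x. -/
def qbinomAt (x : K) (p t : ℕ) : K := qfactAt x p / (qfactAt x t * qfactAt x (p - t))

section GaussBinom

variable {R : Type*} [CommRing R]

def gaussBinom (q : R) : ℕ → ℕ → R
  | _, 0 => 1
  | 0, _ + 1 => 0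
  | n + 1, k + 1 => gaussBinom q n k + q ^ (k + 1) * gaussBinom q n (k + 1)

variable (q : R)

@[simp]
lemma gaussBinom_zero_right (n : ℕ) : gaussBinom q n 0 = 1 := by
  cases n <;> rfl

lemma gaussBinom_succ_succ (n k : ℕ) :
    gaussBinom q (n + 1) (k + 1) = gaussBinom q n k + q ^ (k + 1) * gaussBinom q n (k + 1) :=
  rfl

lemma gaussBinom_eq_zero_of_lt {n k : ℕ} (h : n < k) : gaussBinom q n k = 0 := by
  induction n generalizing k with
  | zero => obtain ⟨k, rfl⟩ := Nat.exists_eq_add_one.mpr h; rfl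
  | succ n ih =>
    obtain ⟨k, rfl⟩ := Nat.exists_eq_add_one.mpr (n.zero_lt_succ.trans h)
    rw [gaussBinom_succ_succ, ih (by omega), ih (by omega), mul_zero, add_zero]

@[simp]
lemma gaussBinom_self (n : ℕ) : gaussBinom q n n = 1 := by
  induction n with
  | zero => rfl
  | succ n ih =>
    rw [gaussBinom_succ_succ, ih, gaussBinom_eq_zero_of_lt q n.lt_succ_self, mul_zero, add_zero]

lemma gaussBinom_succ_succ' (n k : ℕ) :
    gaussBinom q (n + 1) (k + 1) = q ^ (n - k) * gaussBinom q n k + gaussBinom q n (k + 1) := by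
  induction n generalizing k with
  | zero => cases k <;> simp [gaussBinom_succ_succ, gaussBinom_eq_zero_of_lt]
  | succ n ih =>
    cases k with
    | zero =>
      have h := ih 0
      simp only [gaussBinom_succ_succ, gaussBinom_zero_right, zero_add, pow_one, mul_one,
        Nat.sub_zero] at h ⊢
      linear_combination q * h
    | succ k =>
      have h1 := ih k
      have h2 := ih (k + 1)
      have d1 := gaussBinom_succ_succ q n k
      have d2 := gaussBinom_succ_succ q n (k + 1)
      rw [gaussBinom_succ_succ q (n + 1) (k + 1), Nat.add_sub_add_right]
      rcases lt_or_ge k n with hk | hk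
      · obtain ⟨m, rfl⟩ := Nat.exists_eq_add_of_lt hk
        rw [show k + m + 1 - k = m + 1 by omega] at h1 ⊢
        rw [show k + m + 1 - (k + 1) = m by omega] at h2
        linear_combination h1 - q ^ (m + 1) * d1 + q ^ (k + 2) * h2 - d2
      · rw [gaussBinom_eq_zero_of_lt q (show n < k + 1 by omega),
          gaussBinom_eq_zero_of_lt q (show n < k + 1 + 1 by omega), Nat.sub_eq_zero_of_le hk] at *
        linear_combination (q ^ (k + 2) - 1) * d2

def rogersSzego (n : ℕ) (t : R) : R :=
  ∑ k ∈ range (n + 1), t ^ k * gaussBinom q n k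

lemma rogersSzego_eq_sum_range {n m : ℕ} (h : n < m) (t : R) :
    rogersSzego q n t = ∑ k ∈ range m, t ^ k * gaussBinom q n k := by
  refine sum_subset (range_subset_range.mpr h) fun k _ hk => ?_
  rw [gaussBinom_eq_zero_of_lt q (by simpa using hk), mul_zero]

lemma rogersSzego_succ (n : ℕ) (t : R) :
    rogersSzego q (n + 1) t = t * rogersSzego q n t + rogersSzego q n (q * t) := by
  rw [rogersSzego_eq_sum_range q (n.lt_succ_self.trans n.succ.lt_succ_self) (q * t)]
  simp only [rogersSzego, sum_range_succ' _ (n + 1), mul_sum, gaussBinom_succ_succ,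
    gaussBinom_zero_right, pow_zero, mul_one, ← add_assoc, ← sum_add_distrib]
  congr 1
  exact sum_congr rfl fun k _ => by ring

lemma rogersSzego_succ_mul (n : ℕ) (t : R) :
    rogersSzego q (n + 1) (q * t)
      = rogersSzego q n (q * t) + q ^ (n + 1) * t * rogersSzego q n t := by
  rw [rogersSzego_eq_sum_range q (n.lt_succ_self.trans n.succ.lt_succ_self) (q * t)]
  simp only [rogersSzego, sum_range_succ' _ (n + 1), mul_sum, gaussBinom_succ_succ',
    gaussBinom_zero_right, pow_zero, mul_one]
  rw [add_right_comm, ← sum_add_distrib]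
  congr 1
  refine sum_congr rfl fun k hk => ?_
  obtain ⟨m, rfl⟩ := Nat.exists_eq_add_of_le (Nat.lt_succ_iff.mp (mem_range.mp hk))
  rw [Nat.add_sub_cancel_left]
  ring

lemma rogersSzego_add_two (n : ℕ) (t : R) :
    rogersSzego q (n + 2) t
      = (1 + t) * rogersSzego q (n + 1) t - t * (1 - q ^ (n + 1)) * rogersSzego q n t := by
  rw [rogersSzego_succ q (n + 1), rogersSzego_succ_mul, rogersSzego_succ q n]
  ring

lemma rogersSzego_sq_self (n : ℕ) :
    rogersSzego (q ^ 2) n q = ∏ i ∈ range n, (1 + q ^ (i + 1)) := by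
  induction n using Nat.twoStepInduction with
  | zero => simp [rogersSzego]
  | one => simp [rogersSzego, sum_range_succ]
  | more n ih ih' =>
    rw [rogersSzego_add_two, ih, ih', prod_range_succ, prod_range_succ, prod_range_succ]
    ring

end GaussBinom

section Balanced

variable {x : K}

lemma qintAt_add (hx : x ≠ 0) (a b : ℤ) :
    qintAt x (a + b) = x ^ a * qintAt x b + x ^ (-b) * qintAt x a := by
  simp only [qintAt, ← mul_div_assoc, ← add_div, neg_add, zpow_add₀ hx]
  ring

lemma qintAt_two_mul (hx : x ≠ 0) (m : ℤ) :
    qintAt x (2 * m) = (x ^ m + x ^ (-m)) * qintAt x m := by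
  rw [two_mul, qintAt_add hx]
  ring

lemma qfactAt_add (hx : x ≠ 0) (a b : ℕ) :
    qfactAt x (a + b)
      = x ^ (a * b) * gaussBinom (x⁻¹ ^ 2) (a + b) a * (qfactAt x a * qfactAt x b) := by
  induction a generalizing b with
  | zero => simp [qfactAt]
  | succ a iha =>
    induction b with
    | zero => simp [qfactAt]
    | succ b ihb =>
      have key := iha (b + 1)
      rw [← Nat.add_assoc] at key
      rw [Nat.add_right_comm a 1 b] at ihb
      have hfa : qfactAt x (a + 1) = qfactAt x a * qintAt x ((a : ℤ) + 1) := rfl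
      have hfb : qfactAt x (b + 1) = qfactAt x b * qintAt x ((b : ℤ) + 1) := rfl
      have hsplit : qintAt x ((a : ℤ) + 1 + (b + 1))
          = x ^ (a + 1) * qintAt x (b + 1) + (x ^ (b + 1))⁻¹ * qintAt x (a + 1) := by
        rw [qintAt_add hx, zpow_neg]
        norm_cast
      have hunit : (x * x⁻¹) ^ (b + 1) = 1 := by rw [mul_inv_cancel₀ hx, one_pow]
      rw [show a + 1 + (b + 1) = a + b + 1 + 1 by omega, qfactAt, gaussBinom_succ_succ',
        show a + b + 1 - a = b + 1 by omega, hfa, hfb]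
      rw [hfa] at ihb
      rw [hfb] at key
      push_cast
      rw [show (a : ℤ) + b + 1 + 1 = (a + 1) + (b + 1) by ring, hsplit]
      linear_combination (x ^ (a + 1) * qintAt x (b + 1)) * ihb
        + ((x ^ (b + 1))⁻¹ * qintAt x (a + 1)) * key
        - (x ^ (a * (b + 1)) * x⁻¹ ^ (b + 1) * gaussBinom (x⁻¹ ^ 2) (a + b + 1) a
          * qfactAt x a * qintAt x (a + 1) * qfactAt x b * qintAt x (b + 1)) * hunit

lemma qintAt_ne_zero (hx : Function.Injective (x ^ · : ℤ → K)) {n : ℤ} (hn : n ≠ 0) :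
    qintAt x n ≠ 0 := by
  refine div_ne_zero (sub_ne_zero.mpr (hx.ne (by omega))) ?_
  simpa [zpow_neg_one] using sub_ne_zero.mpr (hx.ne (show (1 : ℤ) ≠ -1 by omega))

lemma qfactAt_ne_zero (hx : Function.Injective (x ^ · : ℤ → K)) (n : ℕ) :
    qfactAt x n ≠ 0 := by
  induction n with
  | zero => exact one_ne_zero
  | succ n ih => exact mul_ne_zero ih (qintAt_ne_zero hx (by omega))

lemma qbinomAt_eq_pow_mul_gaussBinom (hx : Function.Injective (x ^ · : ℤ → K)) {p k : ℕ}
    (hk : k ≤ p) :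
    qbinomAt x p k = x ^ (k * (p - k)) * gaussBinom (x⁻¹ ^ 2) p k := by
  have hx₀ : x ≠ 0 := by
    rintro rfl
    exact hx.ne (show (1 : ℤ) ≠ 2 by omega) (by simp)
  obtain ⟨m, rfl⟩ := Nat.exists_eq_add_of_le hk
  rw [qbinomAt, Nat.add_sub_cancel_left, qfactAt_add hx₀,
    mul_div_cancel_right₀ _ (mul_ne_zero (qfactAt_ne_zero hx k) (qfactAt_ne_zero hx m))]

end Balanced

lemma RatFunc.intDegree_X_zpow {F : Type*} [Field F] (n : ℤ) :
    (RatFunc.X ^ n : RatFunc F).intDegree = n := by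
  have hnat (m : ℕ) : (RatFunc.X ^ m : RatFunc F).intDegree = m := by
    rw [← RatFunc.algebraMap_X, ← map_pow, RatFunc.intDegree_polynomial,
      Polynomial.natDegree_X_pow]
  cases n with
  | ofNat m => rw [Int.ofNat_eq_natCast, zpow_natCast, hnat]
  | negSucc m => rw [zpow_negSucc, RatFunc.intDegree_inv, hnat, Int.negSucc_eq]; push_cast; ring

lemma v_zpow_injective : Function.Injective (v ^ · : ℤ → K) := fun m n h => by
  simpa only [v, RatFunc.intDegree_X_zpow] using congrArg RatFunc.intDegree h

lemma qfact_eq_qfactAt (n : ℕ) : qfact n = qfactAt v n := by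
  induction n with
  | zero => rfl
  | succ n ih => rw [qfact, qfactAt, ih]; rfl

lemma ddfact_eq_qfact_mul_prod (p : ℕ) :
    ddfact p = qfact p * ∏ i ∈ range p, (v ^ (i + 1) + (v ^ (i + 1))⁻¹) := by
  induction p with
  | zero => simp [ddfact, qfact]
  | succ p ih =>
    have h : qint (2 * ((p : ℤ) + 1))
        = (v ^ (p + 1) + (v ^ (p + 1))⁻¹) * qint ((p : ℤ) + 1) := by
      change qintAt v _ = _ * qintAt v _
      rw [qintAt_two_mul v_ne_zero, zpow_neg]
      norm_cast
    rw [ddfact, qfact, ih, prod_range_succ, h]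
    ring

lemma prod_range_pow_succ {M : Type*} [CommMonoid M] (x : M) (p : ℕ) :
    ∏ i ∈ range p, x ^ (i + 1) = x ^ (p * (p + 1) / 2) := by
  rw [prod_pow_eq_pow_sum, ← Nat.add_zero (∑ i ∈ range p, (i + 1)),
    ← sum_range_succ' (fun i => i), sum_range_id, Nat.add_sub_cancel, Nat.mul_comm]

lemma ddfact_div_qfact (p : ℕ) :
    ddfact p / qfact p
      = v ^ (p * (p + 1) / 2) * ∏ i ∈ range p, (1 + (v ^ 2)⁻¹ ^ (i + 1)) := by
  rw [ddfact_eq_qfact_mul_prod,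
    mul_div_cancel_left₀ _ (qfact_eq_qfactAt p ▸ qfactAt_ne_zero v_zpow_injective p),
    ← prod_range_pow_succ, ← prod_mul_distrib]
  refine prod_congr rfl fun i _ => ?_
  rw [mul_add, mul_one, inv_pow, ← pow_mul, mul_comm 2, pow_mul, sq, mul_inv, ← mul_assoc,
    mul_inv_cancel₀ (pow_ne_zero _ v_ne_zero), one_mul]

lemma v_sq_zpow_injective : Function.Injective ((v ^ 2) ^ · : ℤ → K) := fun m n h => by
  have := @v_zpow_injective (2 * m) (2 * n) (by simpa only [zpow_mul, zpow_ofNat] using h)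
  omega

lemma v_zpow_mul_qbinomAt_v_sq {p k : ℕ} (hk : k ≤ p) :
    v ^ (((p : ℤ) * ((p : ℤ) + 1)) / 2 - 2 * (k : ℤ) * ((p : ℤ) - (k : ℤ) + 1))
        * qbinomAt (v ^ 2) p k
      = v ^ (p * (p + 1) / 2) * ((v ^ 2)⁻¹ ^ k * gaussBinom ((v ^ 2)⁻¹ ^ 2) p k) := by
  have hpow : v ^ (((p : ℤ) * ((p : ℤ) + 1)) / 2 - 2 * (k : ℤ) * ((p : ℤ) - (k : ℤ) + 1))
      * (v ^ 2) ^ (k * (p - k)) = v ^ (p * (p + 1) / 2) * (v ^ 2)⁻¹ ^ k := by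
    rw [← pow_mul, inv_pow, ← pow_mul, ← zpow_natCast, ← zpow_natCast, ← zpow_natCast,
      ← zpow_neg, ← zpow_add₀ v_ne_zero, ← zpow_add₀ v_ne_zero]
    congr 1
    push_cast [Nat.cast_sub hk]
    ring
  rw [qbinomAt_eq_pow_mul_gaussBinom v_sq_zpow_injective hk, ← mul_assoc, hpow, mul_assoc]

theorem sum_qbinom_vsq_eq_ddfact_div_qfact (p : ℕ) :
    ∑ k ∈ range (p + 1),
      v ^ (((p : ℤ) * ((p : ℤ) + 1)) / 2 - 2 * (k : ℤ) * ((p : ℤ) - (k : ℤ) + 1))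
        * qbinomAt (v ^ 2) p k
    = ddfact p / qfact p := by
  rw [sum_congr rfl fun k hk => v_zpow_mul_qbinomAt_v_sq (Nat.lt_succ_iff.mp (mem_range.mp hk)),
    ← mul_sum, ddfact_div_qfact]
  exact congrArg _ (rogersSzego_sq_self _ p)
end
end

section
/- For every integer d ≥ 1, ∑_{k+m+r=d, k,m,r ≥ 0} (-1)^r · v^{r(r+1)/2 - 2(k-1)m} / ([r]_v! · [2k]_v!! · [2m]_v!!) = 0 in ℚ(v). -/
open scoped BigOperators
open Finset

noncomputable section

/-!
Put `q = v²`. The balanced factorials are monomials in `v` times unbalanced ones: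
`[n]_v! = v^{-binom(n,2)} [n]_q!` and `[2k]_v!! = v^{-k²} (1+q)^k [k]_{q²}!`.
Grouping the triple sum by `n = k + m`, the inner sum over `k + m = n` is, up to a monomial,
`∑_k q^{binom(2k-n,2)} [n choose k]_{q²} = ∏_{i=1}^n (1+q^i)`, and since
`[n]_{q²}! (1+q)^n = [n]_q! ∏_{i=1}^n (1+q^i)` it equals `v^n / [n]_q!`.
What remains is `v^d / [d]_q!` times `∑_r (-1)^r q^{binom(r,2)} [d choose r]_q`, the `q`-binomial
theorem for `∏_{i<d} (1 + x q^i)` at `x = -1`, which vanishes for `d ≥ 1`.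
-/

section GaussianBinomial

variable {R : Type*}

lemma geom_sum_add [Semiring R] (q : R) (a b : ℕ) :
    ∑ i ∈ range (a + b), q ^ i = ∑ i ∈ range a, q ^ i + q ^ a * ∑ i ∈ range b, q ^ i := by
  simp only [sum_range_add, mul_sum, pow_add]

lemma geom_sum_two_mul [CommSemiring R] (q : R) (m : ℕ) :
    ∑ i ∈ range (2 * m), q ^ i = (1 + q) * ∑ i ∈ range m, (q ^ 2) ^ i := by
  induction m with
  | zero => simp
  | succ m ih =>
    rw [show 2 * (m + 1) = 2 * m + 1 + 1 by ring, sum_range_succ, sum_range_succ, ih,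
      sum_range_succ, ← pow_mul]
    ring

def qFactorial [CommSemiring R] (q : R) (n : ℕ) : R :=
  ∏ i ∈ range n, ∑ j ∈ range (i + 1), q ^ j

def qChoose [CommSemiring R] (q : R) : ℕ → ℕ → R
  | _, 0 => 1
  | 0, _ + 1 => 0
  | n + 1, k + 1 => q ^ (k + 1) * qChoose q n (k + 1) + qChoose q n k

section CommSemiring

variable [CommSemiring R] (q : R)

lemma qFactorial_succ (n : ℕ) :
    qFactorial q (n + 1) = qFactorial q n * ∑ j ∈ range (n + 1), q ^ j :=
  prod_range_succ _ n

@[simp]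
lemma qFactorial_zero : qFactorial q 0 = 1 :=
  prod_range_zero _

@[simp]
lemma qChoose_zero_right (n : ℕ) : qChoose q n 0 = 1 := by
  cases n <;> rfl

lemma qChoose_succ_succ (n k : ℕ) :
    qChoose q (n + 1) (k + 1) = q ^ (k + 1) * qChoose q n (k + 1) + qChoose q n k :=
  rfl

lemma qChoose_eq_zero_of_lt : ∀ {n k : ℕ}, n < k → qChoose q n k = 0
  | 0, _ + 1, _ => rfl
  | n + 1, k + 1, h => by
    rw [qChoose_succ_succ, qChoose_eq_zero_of_lt (by omega), qChoose_eq_zero_of_lt (by omega),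
      mul_zero, add_zero]

lemma qChoose_mul_qFactorial_mul_qFactorial {n k : ℕ} (hk : k ≤ n) :
    qChoose q n k * qFactorial q k * qFactorial q (n - k) = qFactorial q n := by
  induction n generalizing k with
  | zero => simp [Nat.le_zero.mp hk]
  | succ n ih =>
    rcases k with _ | k
    · simp
    rcases Nat.lt_or_ge k n with hkn | hkn
    · obtain ⟨m, rfl⟩ : ∃ m, n = m + (k + 1) := ⟨n - (k + 1), by omega⟩
      have ih₁ := ih (k := k + 1) (by omega)
      have ih₂ := ih (k := k) (by omega)
      rw [Nat.add_sub_cancel, qFactorial_succ q k] at ih₁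
      rw [show m + (k + 1) - k = m + 1 by omega, qFactorial_succ] at ih₂
      rw [show m + (k + 1) + 1 - (k + 1) = m + 1 by omega, qChoose_succ_succ, qFactorial_succ q m,
        qFactorial_succ q k, qFactorial_succ q (m + (k + 1)),
        show m + (k + 1) + 1 = k + 1 + (m + 1) by omega, geom_sum_add q (k + 1) (m + 1)]
      calc _ = q ^ (k + 1) * (∑ j ∈ range (m + 1), q ^ j) *
              (qChoose q (m + (k + 1)) (k + 1) * (qFactorial q k * ∑ j ∈ range (k + 1), q ^ j) *
                qFactorial q m)
            + (∑ j ∈ range (k + 1), q ^ j) *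
              (qChoose q (m + (k + 1)) k * qFactorial q k *
                (qFactorial q m * ∑ j ∈ range (m + 1), q ^ j)) := by ring
        _ = _ := by rw [ih₁, ih₂]; ring
    · obtain rfl : k = n := by omega
      have ih' := ih (le_refl k)
      rw [Nat.sub_self, qFactorial_zero, mul_one] at ih'
      rw [qChoose_succ_succ, qChoose_eq_zero_of_lt q (Nat.lt_succ_self k), mul_zero, zero_add,
        Nat.sub_self, qFactorial_zero, mul_one, qFactorial_succ, ← mul_assoc, ih']

lemma qFactorial_sq_mul_pow (n : ℕ) :
    qFactorial (q ^ 2) n * (1 + q) ^ n = qFactorial q n * ∏ i ∈ range n, (1 + q ^ (i + 1)) := by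
  induction n with
  | zero => simp [qFactorial]
  | succ n ih =>
    have hstep : (∑ j ∈ range (n + 1), (q ^ 2) ^ j) * (1 + q)
        = (∑ j ∈ range (n + 1), q ^ j) * (1 + q ^ (n + 1)) := by
      rw [mul_comm, ← geom_sum_two_mul, two_mul, geom_sum_add]
      ring
    rw [qFactorial_succ, qFactorial_succ, prod_range_succ, pow_succ (1 + q) n]
    calc qFactorial (q ^ 2) n * (∑ j ∈ range (n + 1), (q ^ 2) ^ j) * ((1 + q) ^ n * (1 + q))
        = qFactorial (q ^ 2) n * (1 + q) ^ n * ((∑ j ∈ range (n + 1), (q ^ 2) ^ j) * (1 + q)) := by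
          ring
      _ = _ := by rw [ih, hstep]; ring

end CommSemiring

lemma sum_neg_one_pow_mul_qChoose_eq_zero [CommRing R] (q : R) {n : ℕ} (hn : n ≠ 0) :
    ∑ r ∈ range (n + 1), (-1) ^ r * q ^ r.choose 2 * qChoose q n r = 0 := by
  obtain ⟨n, rfl⟩ := Nat.exists_eq_succ_of_ne_zero hn
  set G : ℕ → R := fun r ↦ (-1) ^ r * q ^ (r + 1).choose 2 * qChoose q n r
  have htel : ∀ r ∈ range (n + 1),
      (-1) ^ (r + 1) * q ^ (r + 1).choose 2 * qChoose q (n + 1) (r + 1) = G (r + 1) - G r := by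
    intro r _
    simp only [G, qChoose_succ_succ, Nat.choose_succ_succ' (r + 1), Nat.choose_one_right, pow_add]
    ring
  rw [sum_range_succ', sum_congr rfl htel, sum_range_sub]
  simp [G, qChoose_eq_zero_of_lt q (Nat.lt_succ_self n)]

end GaussianBinomial

section Field

variable {F : Type*} [Field F]

lemma qChoose_symm {q : F} (hq : ∀ n, qFactorial q n ≠ 0) {n k : ℕ} (hk : k ≤ n) :
    qChoose q n (n - k) = qChoose q n k := by
  have h₁ := qChoose_mul_qFactorial_mul_qFactorial q hk
  have h₂ := qChoose_mul_qFactorial_mul_qFactorial q (Nat.sub_le n k)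
  rw [Nat.sub_sub_self hk] at h₂
  apply mul_right_cancel₀ (mul_ne_zero (hq k) (hq (n - k)))
  linear_combination h₂ - h₁

lemma qChoose_ne_zero {q : F} (hq : ∀ n, qFactorial q n ≠ 0) {n k : ℕ}
    (hk : k ≤ n) : qChoose q n k ≠ 0 :=
  left_ne_zero_of_mul (left_ne_zero_of_mul
    ((qChoose_mul_qFactorial_mul_qFactorial q hk).symm ▸ hq n))

variable {t : F}

lemma zpow_mul_qChoose_succ_succ (ht : t ≠ 0) (n k : ℕ) :
    t ^ ((2 * ((k + 1 : ℕ) : ℤ) - (n + 1 : ℕ)) * (2 * ((k + 1 : ℕ) : ℤ) - (n + 1 : ℕ) - 1)) *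
        qChoose (t ^ 4) (n + 1) (k + 1)
      = t ^ (2 * (n + 1)) *
          (t ^ ((2 * ((k + 1 : ℕ) : ℤ) - n) * (2 * ((k + 1 : ℕ) : ℤ) - n - 1)) *
            qChoose (t ^ 4) n (k + 1))
        + t ^ (((n : ℤ) - 2 * k) * ((n : ℤ) - 2 * k - 1)) * qChoose (t ^ 4) n k := by
  have h₁ : t ^ ((2 * ((k + 1 : ℕ) : ℤ) - (n + 1 : ℕ)) * (2 * ((k + 1 : ℕ) : ℤ) - (n + 1 : ℕ) - 1))
        * (t ^ 4) ^ (k + 1)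
      = t ^ (2 * (n + 1)) *
          t ^ ((2 * ((k + 1 : ℕ) : ℤ) - n) * (2 * ((k + 1 : ℕ) : ℤ) - n - 1)) := by
    rw [← pow_mul, ← zpow_natCast t (4 * (k + 1)), ← zpow_natCast t (2 * (n + 1)),
      ← zpow_add₀ ht, ← zpow_add₀ ht]
    push_cast
    ring_nf
  have h₂ : t ^ ((2 * ((k + 1 : ℕ) : ℤ) - (n + 1 : ℕ)) * (2 * ((k + 1 : ℕ) : ℤ) - (n + 1 : ℕ) - 1))
      = t ^ (((n : ℤ) - 2 * k) * ((n : ℤ) - 2 * k - 1)) := by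
    push_cast
    ring_nf
  rw [qChoose_succ_succ, mul_add, ← mul_assoc, h₁, h₂, mul_assoc]

lemma sum_zpow_mul_qChoose_reflect (hq : ∀ n, qFactorial (t ^ 4) n ≠ 0) (n : ℕ) :
    ∑ k ∈ range (n + 1), t ^ (((n : ℤ) - 2 * k) * ((n : ℤ) - 2 * k - 1)) * qChoose (t ^ 4) n k
      = ∑ k ∈ range (n + 1), t ^ ((2 * (k : ℤ) - n) * (2 * (k : ℤ) - n - 1)) *
          qChoose (t ^ 4) n k := by
  rw [← sum_range_reflect]
  refine sum_congr rfl fun k hk ↦ ?_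
  have hkn : k ≤ n := Nat.lt_succ_iff.mp (mem_range.mp hk)
  rw [Nat.add_sub_cancel, qChoose_symm hq hkn, Nat.cast_sub hkn]
  ring_nf

-- `∑_k q^{binom(2k-n,2)} [n choose k]_{q²} = ∏_{i=1}^n (1 + q^i)`, written for `q = t²` so that
-- `binom(2k-n,2)`, with `2k-n` possibly negative, becomes the exponent `(2k-n)(2k-n-1)` of `t`.
lemma sum_zpow_mul_qChoose_eq_prod (ht : t ≠ 0) (hq : ∀ n, qFactorial (t ^ 4) n ≠ 0) (n : ℕ) :
    ∑ k ∈ range (n + 1), t ^ ((2 * (k : ℤ) - n) * (2 * (k : ℤ) - n - 1)) * qChoose (t ^ 4) n k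
      = ∏ i ∈ range n, (1 + (t ^ 2) ^ (i + 1)) := by
  induction n with
  | zero => simp
  | succ n ih =>
    set S := ∑ k ∈ range (n + 1),
      t ^ ((2 * (k : ℤ) - n) * (2 * (k : ℤ) - n - 1)) * qChoose (t ^ 4) n k
    have hshift : ∑ k ∈ range (n + 1),
        t ^ ((2 * ((k + 1 : ℕ) : ℤ) - n) * (2 * ((k + 1 : ℕ) : ℤ) - n - 1)) *
          qChoose (t ^ 4) n (k + 1)
        = S - t ^ ((n : ℤ) * (n + 1)) := by
      rw [sum_range_succ, qChoose_eq_zero_of_lt _ (Nat.lt_succ_self n), mul_zero, add_zero,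
        eq_sub_iff_add_eq]
      simp only [S]
      rw [sum_range_succ' _ n, qChoose_zero_right, mul_one]
      congr 2
      push_cast
      ring
    have hend : t ^ ((2 * ((0 : ℕ) : ℤ) - (n + 1 : ℕ)) * (2 * ((0 : ℕ) : ℤ) - (n + 1 : ℕ) - 1))
        = t ^ (2 * (n + 1)) * t ^ ((n : ℤ) * (n + 1)) := by
      rw [← zpow_natCast t (2 * (n + 1)), ← zpow_add₀ ht]
      push_cast
      ring_nf
    rw [prod_range_succ, ← ih, sum_range_succ',
      sum_congr rfl fun k _ ↦ zpow_mul_qChoose_succ_succ ht n k, sum_add_distrib, ← mul_sum,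
      hshift, sum_zpow_mul_qChoose_reflect hq, qChoose_zero_right, hend,
      ← pow_mul]
    ring

end Field

lemma Int.mul_add_one_ediv_two (r : ℕ) : (r : ℤ) * (r + 1) / 2 = ((r + 1).choose 2 : ℕ) := by
  refine Int.ediv_eq_of_eq_mul_left two_ne_zero ?_
  induction r with
  | zero => rfl
  | succ r ih =>
    rw [Nat.choose_succ_succ' (r + 1), Nat.choose_one_right]
    push_cast at ih ⊢
    linear_combination ih

open Polynomial in
lemma qFactorial_v_pow_ne_zero (c n : ℕ) : qFactorial (v ^ c) n ≠ 0 := by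
  refine prod_ne_zero_iff.mpr fun i _ ↦ ?_
  have hp : ∑ j ∈ range (i + 1), (X ^ c : ℚ[X]) ^ j ≠ 0 := fun h ↦
    Nat.cast_add_one_ne_zero (R := ℚ) i (by simpa [eval_finsetSum] using congrArg (eval 1) h)
  simpa [v, map_sum] using RatFunc.algebraMap_ne_zero hp

open Polynomial in
lemma one_add_v_pow_ne_zero (c : ℕ) : 1 + v ^ c ≠ 0 := by
  have hp : (1 + X ^ c : ℚ[X]) ≠ 0 := fun h ↦ by
    have h₁ := congrArg (eval 1) h
    norm_num at h₁
  simpa [v] using RatFunc.algebraMap_ne_zero hp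

open Polynomial in
lemma v_sub_inv_ne_zero : v - v⁻¹ ≠ 0 := by
  have hp : (X ^ 2 - C 1 : ℚ[X]) ≠ 0 := X_pow_sub_C_ne_zero two_pos 1
  have h : v - v⁻¹ = v⁻¹ * algebraMap ℚ[X] K (X ^ 2 - C 1) := by
    simp [v, mul_sub, sq, RatFunc.X_ne_zero]
  rw [h]
  exact mul_ne_zero (inv_ne_zero v_ne_zero) (RatFunc.algebraMap_ne_zero hp)

lemma qint_natCast (n : ℕ) : qint n = v ^ (1 - n : ℤ) * ∑ j ∈ range n, (v ^ 2) ^ j := by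
  rw [qint, div_eq_iff v_sub_inv_ne_zero]
  have h₁ : v ^ (1 - n : ℤ) = v * v ^ (-(n : ℤ)) := by
    rw [sub_eq_add_neg, zpow_add₀ v_ne_zero, zpow_one]
  have h₂ : v ^ (n : ℤ) = v ^ (-(n : ℤ)) * (v ^ 2) ^ n := by
    rw [← pow_mul, ← zpow_natCast v (2 * n), ← zpow_add₀ v_ne_zero]
    push_cast
    ring_nf
  rw [h₁, h₂]
  linear_combination -v ^ (-(n : ℤ)) * geom_sum_mul (v ^ 2) n
    + v ^ (-(n : ℤ)) * (∑ j ∈ range n, (v ^ 2) ^ j) * mul_inv_cancel₀ v_ne_zero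

lemma qfact_eq_zpow_mul_qFactorial (n : ℕ) :
    qfact n = v ^ (-(n.choose 2 : ℤ)) * qFactorial (v ^ 2) n := by
  induction n with
  | zero => simp [qfact]
  | succ n ih =>
    have hexp : v ^ (-(((n + 1).choose 2 : ℕ) : ℤ))
        = v ^ (-(n.choose 2 : ℤ)) * v ^ (1 - ((n + 1 : ℕ) : ℤ)) := by
      rw [← zpow_add₀ v_ne_zero, Nat.choose_succ_succ', Nat.choose_one_right]
      push_cast
      ring_nf
    rw [qfact, ih, qFactorial_succ, show (n : ℤ) + 1 = ((n + 1 : ℕ) : ℤ) by push_cast; rfl,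
      qint_natCast, hexp]
    ring

lemma ddfact_eq_zpow_mul_qFactorial (k : ℕ) :
    ddfact k = v ^ (-(k ^ 2 : ℤ)) * (qFactorial (v ^ 4) k * (1 + v ^ 2) ^ k) := by
  induction k with
  | zero => simp [ddfact]
  | succ k ih =>
    have hexp : v ^ (-(((k + 1 : ℕ) : ℤ) ^ 2))
        = v ^ (-(k ^ 2 : ℤ)) * v ^ (1 - ((2 * (k + 1) : ℕ) : ℤ)) := by
      rw [← zpow_add₀ v_ne_zero]
      push_cast
      ring_nf
    rw [ddfact, ih, qFactorial_succ,
      show 2 * ((k : ℤ) + 1) = ((2 * (k + 1) : ℕ) : ℤ) by push_cast; rfl, qint_natCast,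
      geom_sum_two_mul, ← pow_mul, hexp]
    ring

lemma sum_range_sum_range_sub {M : Type*} [AddCommMonoid M] (N : ℕ) (f : ℕ → ℕ → M) :
    ∑ k ∈ range (N + 1), ∑ m ∈ range (N + 1 - k), f k m
      = ∑ n ∈ range (N + 1), ∑ k ∈ range (n + 1), f k (n - k) := by
  rw [sum_sigma', sum_sigma']
  refine sum_nbij' (fun p ↦ ⟨p.1 + p.2, p.1⟩) (fun p ↦ ⟨p.2, p.1 - p.2⟩) ?_ ?_ ?_ ?_ ?_
  all_goals
    simp only [mem_sigma, mem_range, Sigma.forall, Sigma.mk.injEq, heq_eq_eq,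
      Nat.add_sub_cancel_left, and_true, implies_true]
  all_goals intros; omega

lemma zpow_div_ddfact_mul_ddfact {n k : ℕ} (hk : k ≤ n) :
    v ^ (-2 * ((k : ℤ) - 1) * ((n - k : ℕ) : ℤ)) / (ddfact k * ddfact (n - k))
      = v ^ (n : ℤ) / (qFactorial (v ^ 4) n * (1 + v ^ 2) ^ n) *
          (v ^ ((2 * (k : ℤ) - n) * (2 * (k : ℤ) - n - 1)) * qChoose (v ^ 4) n k) := by
  have hexp : v ^ (-2 * ((k : ℤ) - 1) * ((n - k : ℕ) : ℤ))
      = v ^ (-(k ^ 2 : ℤ)) * v ^ (-(((n - k : ℕ) : ℤ) ^ 2)) *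
          (v ^ (n : ℤ) * v ^ ((2 * (k : ℤ) - n) * (2 * (k : ℤ) - n - 1))) := by
    simp only [← zpow_add₀ v_ne_zero]
    push_cast [Nat.cast_sub hk]
    ring_nf
  have hC := qChoose_ne_zero (qFactorial_v_pow_ne_zero 4) hk
  have h2 := one_add_v_pow_ne_zero 2
  have hpow : (1 + v ^ 2) ^ n = (1 + v ^ 2) ^ k * (1 + v ^ 2) ^ (n - k) := by
    rw [← pow_add, Nat.add_sub_cancel' hk]
  have hv := v_ne_zero
  rw [ddfact_eq_zpow_mul_qFactorial, ddfact_eq_zpow_mul_qFactorial, hexp,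
    ← qChoose_mul_qFactorial_mul_qFactorial _ hk, hpow]
  field_simp

lemma sum_zpow_div_ddfact_mul_ddfact (n : ℕ) :
    ∑ k ∈ range (n + 1),
        v ^ (-2 * ((k : ℤ) - 1) * ((n - k : ℕ) : ℤ)) / (ddfact k * ddfact (n - k))
      = v ^ (n : ℤ) / qFactorial (v ^ 2) n := by
  have hprod : qFactorial (v ^ 4) n * (1 + v ^ 2) ^ n
      = qFactorial (v ^ 2) n * ∏ i ∈ range n, (1 + (v ^ 2) ^ (i + 1)) := by
    rw [← qFactorial_sq_mul_pow, ← pow_mul]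
  have hprod_ne : ∏ i ∈ range n, (1 + (v ^ 2) ^ (i + 1)) ≠ 0 :=
    prod_ne_zero_iff.mpr fun i _ ↦ by rw [← pow_mul]; exact one_add_v_pow_ne_zero _
  rw [sum_congr rfl fun k hk ↦ zpow_div_ddfact_mul_ddfact (Nat.lt_succ_iff.mp (mem_range.mp hk)),
    ← mul_sum, sum_zpow_mul_qChoose_eq_prod v_ne_zero (qFactorial_v_pow_ne_zero 4), hprod,
    div_mul_eq_div_div, div_mul_cancel₀ _ hprod_ne]

lemma zpow_div_qfact_mul_zpow_div_qFactorial {r d : ℕ} (h : r ≤ d) :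
    v ^ (((r + 1).choose 2 : ℕ) : ℤ) / qfact r *
        (v ^ ((d - r : ℕ) : ℤ) / qFactorial (v ^ 2) (d - r))
      = v ^ (d : ℤ) / qFactorial (v ^ 2) d * ((v ^ 2) ^ r.choose 2 * qChoose (v ^ 2) d r) := by
  have hexp : v ^ (((r + 1).choose 2 : ℕ) : ℤ) * v ^ ((d - r : ℕ) : ℤ)
      = v ^ (-(r.choose 2 : ℤ)) * (v ^ (d : ℤ) * (v ^ 2) ^ r.choose 2) := by
    rw [← pow_mul, ← zpow_natCast v (2 * _)]
    simp only [← zpow_add₀ v_ne_zero]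
    rw [Nat.choose_succ_succ', Nat.choose_one_right]
    push_cast [Nat.cast_sub h]
    ring_nf
  have hC := qChoose_ne_zero (qFactorial_v_pow_ne_zero 2) h
  have hv := v_ne_zero
  rw [qfact_eq_zpow_mul_qFactorial, ← qChoose_mul_qFactorial_mul_qFactorial _ h,
    div_mul_div_comm, hexp]
  field_simp

theorem triple_sum_vanishes (d : ℕ) (hd : 1 ≤ d) :
    ∑ k ∈ range (d + 1), ∑ m ∈ range (d + 1 - k),
      (-1 : K) ^ (d - k - m) *
        v ^ ((((d : ℤ) - k - m) * ((d : ℤ) - k - m + 1)) / 2 - 2 * ((k : ℤ) - 1) * (m : ℤ))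
        / (qfact (d - k - m) * ddfact k * ddfact m) = 0 := by
  calc _ = ∑ n ∈ range (d + 1),
          (-1) ^ (d - n) * v ^ (((d - n + 1).choose 2 : ℕ) : ℤ) / qfact (d - n) *
            ∑ k ∈ range (n + 1),
              v ^ (-2 * ((k : ℤ) - 1) * ((n - k : ℕ) : ℤ)) / (ddfact k * ddfact (n - k)) := by
        rw [sum_range_sum_range_sub]
        refine sum_congr rfl fun n hn ↦ ?_
        rw [mul_sum]
        refine sum_congr rfl fun k hk ↦ ?_
        simp only [mem_range] at hn hk
        rw [show d - k - (n - k) = d - n by omega,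
          show (d : ℤ) - k - ((n - k : ℕ) : ℤ) = ((d - n : ℕ) : ℤ) by omega,
          Int.mul_add_one_ediv_two, sub_eq_add_neg, zpow_add₀ v_ne_zero, neg_mul_eq_neg_mul,
          neg_mul_eq_neg_mul]
        ring
    _ = ∑ r ∈ range (d + 1), v ^ (d : ℤ) / qFactorial (v ^ 2) d *
          ((-1) ^ r * (v ^ 2) ^ r.choose 2 * qChoose (v ^ 2) d r) := by
        rw [← sum_range_reflect]
        refine sum_congr rfl fun r hr ↦ ?_
        have hrd : r ≤ d := Nat.lt_succ_iff.mp (mem_range.mp hr)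
        rw [Nat.add_sub_cancel, Nat.sub_sub_self hrd, sum_zpow_div_ddfact_mul_ddfact,
          mul_div_assoc, mul_assoc, zpow_div_qfact_mul_zpow_div_qFactorial hrd]
        ring
    _ = 0 := by rw [← mul_sum, sum_neg_one_pow_mul_qChoose_eq_zero _ (by omega), mul_zero]
end
end

section
/- Let q be a prime power and let 𝔽_q be the finite field with q elements. For integers s, t ≥ 0 and 0 ≤ r ≤ min(s,t), the number of s×t matrices over 𝔽_q of rank r equals ∏_{j=0}^{r-1} (q^s - q^j)(q^t - q^j)/(q^r - q^j). -/
/-!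
Count rank-`r` linear maps `V → W` by their range. Each `r`-dimensional subspace `U ≤ W` is the
range of exactly as many maps as there are surjections `V → U`; by duality these correspond to
injections `Dual U → Dual V`, i.e. to linearly independent `r`-tuples in `Dual V`, of which there
are `∏_{j<r} (q^{dim V} - q^j)`. Running the same count with `V = F^r`, where rank `r` means
injective, shows that the number of `r`-dimensional subspaces of `W` times `|GL_r(F)|` is the
number of independent `r`-tuples in `W`. Dividing out `|GL_r(F)| = ∏_{j<r} (q^r - q^j)` gives the
formula.
-/

open Finset Module Function

theorem Nat.card_eq_card_mul_of_card_fiber {α β : Type*} [Finite α] [Finite β] (ρ : α → β)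
    {c : ℕ} (h : ∀ b, Nat.card {a // ρ a = b} = c) : Nat.card α = Nat.card β * c := by
  have := Fintype.ofFinite β
  rw [← Nat.card_congr (Equiv.sigmaFiberEquiv ρ), Nat.card_sigma]
  simp [h, Nat.card_eq_fintype_card]

theorem Module.Basis.injective_constr_iff {R M M' ι : Type*} [CommRing R] [AddCommGroup M]
    [Module R M] [AddCommGroup M'] [Module R M'] (b : Basis ι R M) (v : ι → M') :
    Function.Injective (b.constr R v) ↔ LinearIndependent R v := by
  refine ⟨fun h => ?_, b.injective_constr_of_linearIndependent⟩
  rw [← funext (b.constr_basis R v)]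
  exact b.linearIndependent.map' _ (LinearMap.ker_eq_bot.2 h)

theorem LinearMap.finrank_range_eq_iff_injective {K V W : Type*} [DivisionRing K]
    [AddCommGroup V] [Module K V] [AddCommGroup W] [Module K W] [FiniteDimensional K V]
    (f : V →ₗ[K] W) : finrank K (LinearMap.range f) = finrank K V ↔ Injective f := by
  rw [← LinearMap.ker_eq_bot, ← Submodule.finrank_eq_zero, ← f.finrank_range_add_finrank_ker]
  omega

def LinearMap.rangeEqEquivSurjective {R M N : Type*} [Semiring R] [AddCommMonoid M] [Module R M]
    [AddCommMonoid N] [Module R N] (U : Submodule R N) :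
    {f : M →ₗ[R] N // LinearMap.range f = U} ≃ {g : M →ₗ[R] U // Function.Surjective g} where
  toFun f := ⟨f.1.codRestrict U fun x => f.2.le (LinearMap.mem_range_self f.1 x), by
    rw [← LinearMap.range_eq_top, LinearMap.range_codRestrict, f.2, Submodule.comap_subtype_self]⟩
  invFun g := ⟨U.subtype ∘ₗ g.1, by
    rw [LinearMap.range_comp, LinearMap.range_eq_top.2 g.2, Submodule.map_subtype_top]⟩
  left_inv f := Subtype.ext (LinearMap.subtype_comp_codRestrict _ _ _)
  right_inv _ := rfl

instance LinearMap.finite {R M N : Type*} [Semiring R] [AddCommMonoid M] [Module R M]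
    [AddCommMonoid N] [Module R N] [Finite M] [Finite N] : Finite (M →ₗ[R] N) :=
  Finite.of_injective _ DFunLike.coe_injective

theorem Nat.cast_prod_range_pow_sub {R : Type*} [CommRing R] {q n r : ℕ} (hq : 1 ≤ q)
    (hr : r ≤ n) :
    ((∏ j ∈ range r, (q ^ n - q ^ j) : ℕ) : R) = ∏ j ∈ range r, ((q : R) ^ n - (q : R) ^ j) := by
  rw [Nat.cast_prod]
  refine prod_congr rfl fun j hj => ?_
  rw [Nat.cast_sub (Nat.pow_le_pow_right hq ((mem_range.1 hj).le.trans hr)), Nat.cast_pow,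
    Nat.cast_pow]

section FiniteField

variable {F V W : Type*} [Field F] [Fintype F] [AddCommGroup V] [Module F V] [Finite V]
  [AddCommGroup W] [Module F W] [Finite W]

local notation "q" => Fintype.card F

theorem card_injective_linearMap (h : finrank F V ≤ finrank F W) :
    Nat.card {f : V →ₗ[F] W // Injective f} =
      ∏ j ∈ range (finrank F V), (q ^ finrank F W - q ^ j) := by
  let b := Module.finBasis F V
  have e : {v : Fin (finrank F V) → W // LinearIndependent F v} ≃
      {f : V →ₗ[F] W // Injective f} :=
    (b.constr F).toEquiv.subtypeEquiv fun v => (b.injective_constr_iff v).symm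
  rw [← Nat.card_congr e, card_linearIndependent h]
  exact Fin.prod_univ_eq_prod_range (fun j => q ^ finrank F W - q ^ j) _

theorem Module.Dual.transpose_bijective :
    Bijective (Module.Dual.transpose (R := F) : (V →ₗ[F] W) → _) := by
  refine Injective.bijective_of_nat_card_le (fun f g hfg => ?_) ?_
  · rw [← Module.dualMap_dualMap_eq_iff]
    exact congrArg LinearMap.dualMap hfg
  · rw [Module.natCard_eq_pow_finrank (K := F) (V := Dual F W →ₗ[F] Dual F V),
      Module.natCard_eq_pow_finrank (K := F) (V := V →ₗ[F] W),
      finrank_linearMap (R := F) (S := F) (M := Dual F W) (N := Dual F V),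
      finrank_linearMap (R := F) (S := F) (M := V) (N := W), Subspace.dual_finrank_eq,
      Subspace.dual_finrank_eq, mul_comm]

theorem card_surjective_linearMap (h : finrank F W ≤ finrank F V) :
    Nat.card {f : V →ₗ[F] W // Surjective f} =
      ∏ j ∈ range (finrank F W), (q ^ finrank F V - q ^ j) := by
  have e : {f : V →ₗ[F] W // Surjective f} ≃ {g : Dual F W →ₗ[F] Dual F V // Injective g} :=
    (Equiv.ofBijective _ Dual.transpose_bijective).subtypeEquiv
      fun _ => LinearMap.dualMap_injective_iff.symm
  rw [Nat.card_congr e, card_injective_linearMap] <;> simp only [Subspace.dual_finrank_eq, h]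

theorem card_finrank_range_eq_card_submodule_mul {r : ℕ} (hr : r ≤ finrank F V) :
    Nat.card {f : V →ₗ[F] W // finrank F (LinearMap.range f) = r} =
      Nat.card {U : Submodule F W // finrank F U = r} *
        ∏ j ∈ range r, (q ^ finrank F V - q ^ j) := by
  refine Nat.card_eq_card_mul_of_card_fiber (fun f => ⟨LinearMap.range f.1, f.2⟩) fun U => ?_
  calc _ = Nat.card {f : V →ₗ[F] W // LinearMap.range f = U.1} :=
        Nat.card_congr <| (Equiv.subtypeEquivRight fun _ => Subtype.ext_iff).trans
          (Equiv.subtypeSubtypeEquivSubtype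
            fun {f} (h : LinearMap.range f = U.1) => h ▸ U.2)
    _ = Nat.card {g : V →ₗ[F] U.1 // Surjective g} :=
        Nat.card_congr (LinearMap.rangeEqEquivSurjective U.1)
    _ = _ := by rw [card_surjective_linearMap (U.2.trans_le hr), U.2]

theorem card_submodule_finrank_eq_mul {r : ℕ} (hr : r ≤ finrank F W) :
    Nat.card {U : Submodule F W // finrank F U = r} * ∏ j ∈ range r, (q ^ r - q ^ j) =
      ∏ j ∈ range r, (q ^ finrank F W - q ^ j) := by
  have hr' : finrank F (Fin r → F) = r := finrank_fin_fun F
  calc _ = Nat.card {f : (Fin r → F) →ₗ[F] W // finrank F (LinearMap.range f) = r} := by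
        rw [card_finrank_range_eq_card_submodule_mul hr'.ge, hr']
    _ = Nat.card {f : (Fin r → F) →ₗ[F] W // Injective f} :=
        Nat.card_congr <| Equiv.subtypeEquivRight fun f => by
          rw [← f.finrank_range_eq_iff_injective, hr']
    _ = _ := by rw [card_injective_linearMap (hr'.trans_le hr), hr']

theorem card_finrank_range_eq_mul {r : ℕ} (hV : r ≤ finrank F V) (hW : r ≤ finrank F W) :
    Nat.card {f : V →ₗ[F] W // finrank F (LinearMap.range f) = r} *
        ∏ j ∈ range r, (q ^ r - q ^ j) =
      (∏ j ∈ range r, (q ^ finrank F W - q ^ j)) * ∏ j ∈ range r, (q ^ finrank F V - q ^ j) := by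
  rw [card_finrank_range_eq_card_submodule_mul hV, mul_right_comm,
    card_submodule_finrank_eq_mul hW]

end FiniteField

theorem Matrix.card_rank_eq_mul {F : Type*} [Field F] [Fintype F] {s t r : ℕ}
    (hr : r ≤ min s t) :
    Nat.card {A : Matrix (Fin s) (Fin t) F // A.rank = r} *
        ∏ j ∈ range r, (Fintype.card F ^ r - Fintype.card F ^ j) =
      (∏ j ∈ range r, (Fintype.card F ^ s - Fintype.card F ^ j)) *
        ∏ j ∈ range r, (Fintype.card F ^ t - Fintype.card F ^ j) := by
  have e : {A : Matrix (Fin s) (Fin t) F // A.rank = r} ≃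
      {f : (Fin t → F) →ₗ[F] (Fin s → F) // finrank F (LinearMap.range f) = r} :=
    Matrix.toLin'.toEquiv.subtypeEquiv fun _ => Iff.rfl
  rw [le_min_iff] at hr
  rw [Nat.card_congr e, card_finrank_range_eq_mul] <;> simp only [finrank_fin_fun, hr]

/-- The number of s x t matrices over a finite field with q elements having rank r
equals the product formula. -/
theorem card_rank_r_matrices (F : Type) [Field F] [Fintype F] (s t r : ℕ)
    (hr : r ≤ min s t) :
    (Nat.card {A : Matrix (Fin s) (Fin t) F // A.rank = r} : ℚ)
    = ∏ j ∈ range r,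
        (((Fintype.card F : ℚ) ^ s - (Fintype.card F : ℚ) ^ j) *
          ((Fintype.card F : ℚ) ^ t - (Fintype.card F : ℚ) ^ j)) /
          ((Fintype.card F : ℚ) ^ r - (Fintype.card F : ℚ) ^ j) := by
  have hq : 1 < Fintype.card F := Fintype.one_lt_card
  have hne : ∏ j ∈ range r, ((Fintype.card F : ℚ) ^ r - (Fintype.card F : ℚ) ^ j) ≠ 0 :=
    prod_ne_zero_iff.2 fun j hj => sub_ne_zero.2
      (pow_lt_pow_right₀ (by exact_mod_cast hq) (mem_range.1 hj)).ne'
  rw [prod_div_distrib, prod_mul_distrib, eq_div_iff hne,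
    ← Nat.cast_prod_range_pow_sub hq.le le_rfl,
    ← Nat.cast_prod_range_pow_sub hq.le (hr.trans (min_le_left s t)),
    ← Nat.cast_prod_range_pow_sub hq.le (hr.trans (min_le_right s t)),
    ← Nat.cast_mul, ← Nat.cast_mul, Matrix.card_rank_eq_mul hr]
end
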